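/- arXiv:1907.06388 — 4 statements merged into one kernel-verified Lean document; each statement's English description precedes it below -/
import Mathlib

section
/- Let X have an even density with CDF F. Partition the real line into J quantisation intervals [q_s, q_{s+1}) with probabilities p_s = F(q_{s+1}) - F(q_s), where the partition is symmetric (q_{J-s} = -q_s, hence p_s = p_{J-1-s}). Define S as the index of the interval containing X and V = sign(X). If J is even, then Pr[V = 1] = 1/2 and V is independent of the helper data U = floor(m (F(X) - F(q_S))/p_S) for any integer m ≥ 1; in particular H(V | U) = 1. -/
/- Zero-leakage quantising helper data system, modelled in quantile space:
since F is continuous and strictly increasing and the density is even,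
T = F(X) is uniform on [0,1) and the quantisation boundaries q_s become
cumulative probabilities c s = F(q_s), with c 0 = 0, c J = 1, and the
symmetry of the density becoming c (J-s) = 1 - c s.  V = sign(X) = 1 iff
F(X) > 1/2.  S is the quantisation index, U the m-fold sub-interval index. -/

open MeasureTheory Set
open scoped Classical

/-- probability of an event under T uniform on [0,1) -/
noncomputable def pr (A : Set ℝ) : ℝ := (volume (A ∩ Set.Ico (0:ℝ) 1)).toReal

/-- binary entropy (base 2) -/
noncomputable def hb (p : ℝ) : ℝ := -(p * Real.logb 2 p) - (1 - p) * Real.logb 2 (1 - p)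

/-- quantisation symbol: index of interval [c s, c (s+1)) containing t -/
noncomputable def qS (c : ℕ → ℝ) (J : ℕ) (t : ℝ) : ℕ :=
  Nat.findGreatest (fun s => c s ≤ t) (J - 1)

/-- helper data: sub-interval index u = ⌊m (F(x) - F(q_S))/p_S⌋ -/
noncomputable def qU (c : ℕ → ℝ) (J m : ℕ) (t : ℝ) : ℕ :=
  (⌊(m : ℝ) * (t - c (qS c J t)) / (c (qS c J t + 1) - c (qS c J t))⌋).toNat

/-- V = sign(X); in quantile space X > 0 ↔ F(X) > 1/2 -/
noncomputable def Vq (t : ℝ) : ℤ := if 1/2 < t then 1 else -1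

section Aux
variable {c : ℕ → ℝ} {J m : ℕ}

lemma aux_mono' (hmono : ∀ s < J, c s < c (s + 1)) :
    ∀ {a b : ℕ}, a ≤ b → b ≤ J → c a ≤ c b := by
  intro a b
  induction b with
  | zero => intro h _; interval_cases a; rfl
  | succ n ih =>
    intro hab hbJ
    rcases Nat.lt_or_ge a (n+1) with h | h
    · exact (ih (Nat.lt_succ_iff.mp h) (by omega)).trans (hmono n (by omega)).le
    · have : a = n + 1 := le_antisymm hab h
      simp [this]

lemma aux_qS_eq (hmono : ∀ s < J, c s < c (s + 1)) (s : ℕ) (hs : s < J)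
    {t : ℝ} (h1 : c s ≤ t) (h2 : t < c (s + 1)) : qS c J t = s := by
  rw [qS, Nat.findGreatest_eq_iff]
  refine ⟨by omega, fun _ => h1, ?_⟩
  intro n hn hnJ hcn
  have : c (s + 1) ≤ c n := aux_mono' hmono hn (by omega)
  linarith

lemma aux_qU_inter (hm : 1 ≤ m) (hmono : ∀ s < J, c s < c (s + 1))
    (s : ℕ) (hs : s < J) (u : ℕ) :
    {t | qU c J m t = u} ∩ Ico (c s) (c (s + 1)) =
      Ico (c s + u * (c (s + 1) - c s) / m) (c s + (u + 1) * (c (s + 1) - c s) / m)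
        ∩ Ico (c s) (c (s + 1)) := by
  have hm' : (0 : ℝ) < m := by exact_mod_cast hm
  ext t
  simp only [mem_inter_iff, mem_setOf_eq, and_congr_left_iff]
  rintro ht
  have h1 : c s ≤ t := ht.1
  have h2 : t < c (s + 1) := ht.2
  set p : ℝ := c (s + 1) - c s with hpdef
  have hp : 0 < p := by have := hmono s hs; simp [hpdef]; linarith
  have hqS := aux_qS_eq hmono s hs h1 h2
  have key : ∀ a : ℝ, (a ≤ m * (t - c s) / p ↔ c s + a * p / m ≤ t) := by
    intro a
    constructor
    · intro h
      have h2' : a * p ≤ m * (t - c s) := (le_div_iff₀ hp).mp h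
      have h3 : a * p / m ≤ t - c s := by
        rw [div_le_iff₀ hm']; linarith [mul_comm (t - c s) (m : ℝ)]
      linarith
    · intro h
      have h3 : a * p / m ≤ t - c s := by linarith
      have h2' : a * p ≤ (t - c s) * m := (div_le_iff₀ hm').mp h3
      rw [le_div_iff₀ hp]; linarith [mul_comm (t - c s) (m : ℝ)]
  have key2 : ∀ a : ℝ, (m * (t - c s) / p < a ↔ t < c s + a * p / m) := by
    intro a
    constructor
    · intro h
      have h2' : m * (t - c s) < a * p := (div_lt_iff₀ hp).mp h
      have h3 : t - c s < a * p / m := by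
        rw [lt_div_iff₀ hm']; linarith [mul_comm (t - c s) (m : ℝ)]
      linarith
    · intro h
      have h3 : t - c s < a * p / m := by linarith
      have h2' : (t - c s) * m < a * p := (lt_div_iff₀ hm').mp h3
      rw [div_lt_iff₀ hp]; linarith [mul_comm (t - c s) (m : ℝ)]
  have hx : 0 ≤ (m : ℝ) * (t - c s) / p :=
    div_nonneg (mul_nonneg (by positivity) (by linarith)) hp.le
  rw [qU, hqS, Int.floor_toNat, Nat.floor_eq_iff hx, mem_Ico, key u, key2 ((u : ℝ) + 1)]

lemma aux_union (hmono : ∀ s < J, c s < c (s + 1)) :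
    ∀ n ≤ J, (⋃ s ∈ Finset.range n, Ico (c s) (c (s + 1))) = Ico (c 0) (c n) := by
  intro n
  induction n with
  | zero => intro _; simp
  | succ k ih =>
    intro hk
    rw [Finset.range_add_one]
    simp only [Finset.mem_insert, Set.iUnion_iUnion_eq_or_left]
    rw [ih (by omega), Set.union_comm, Set.Ico_union_Ico_eq_Ico]
    · exact aux_mono' hmono (Nat.zero_le k) (by omega)
    · exact (hmono k (by omega)).le

lemma aux_disj (hmono : ∀ s < J, c s < c (s + 1)) :
    ∀ a ∈ Finset.range J, ∀ b ∈ Finset.range J, a ≠ b →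
      Disjoint (Ico (c a) (c (a + 1))) (Ico (c b) (c (b + 1))) := by
  have key : ∀ a b, a < b → b < J →
      Disjoint (Ico (c a) (c (a + 1))) (Ico (c b) (c (b + 1))) := by
    intro a b hab hbJ
    have : c (a + 1) ≤ c b := aux_mono' hmono (by omega) (by omega)
    rw [Set.Ico_disjoint_Ico]
    have h1 : min (c (a + 1)) (c (b + 1)) ≤ c (a + 1) := min_le_left _ _
    have h2 : c b ≤ max (c a) (c b) := le_max_right _ _
    linarith
  intro a ha b hb hab
  simp only [Finset.mem_range] at ha hb
  rcases Nat.lt_or_ge a b with h | h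
  · exact key a b h hb
  · exact (key b a (by omega) ha).symm

lemma aux_pr (hmono : ∀ s < J, c s < c (s + 1)) (hc0 : c 0 = 0) (hcJ : c J = 1)
    (B : ℕ → Set ℝ) (hB : ∀ s, MeasurableSet (B s))
    (hsub : ∀ s, B s ⊆ Ico (c s) (c (s + 1)))
    (A : Set ℝ) (hA : ∀ s < J, A ∩ Ico (c s) (c (s + 1)) = B s) :
    pr A = ∑ s ∈ Finset.range J, (volume (B s)).toReal := by
  have h01 : Set.Ico (0:ℝ) 1 = Ico (c 0) (c J) := by rw [hc0, hcJ]
  have hU : A ∩ Set.Ico (0:ℝ) 1 = ⋃ s ∈ Finset.range J, B s := by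
    rw [h01, ← aux_union hmono J le_rfl, Set.inter_iUnion₂]
    exact Set.iUnion₂_congr fun s hs => hA s (Finset.mem_range.mp hs)
  have hdisj : Set.PairwiseDisjoint (Finset.range J : Set ℕ) B := by
    intro a ha b hb hab
    exact ((aux_disj hmono a ha b hb hab).mono (hsub a) (hsub b))
  rw [pr, hU, measure_biUnion_finset hdisj (fun s _ => hB s)]
  rw [ENNReal.toReal_sum]
  intro s _
  exact ((measure_mono (hsub s)).trans_lt (by simp)).ne

end Aux

theorem stmt_1 (J m : ℕ) (hJ : 1 ≤ J) (hJeven : Even J) (hm : 1 ≤ m)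
    (c : ℕ → ℝ) (hc0 : c 0 = 0) (hcJ : c J = 1)
    (hmono : ∀ s < J, c s < c (s + 1))
    (hsym : ∀ s ≤ J, c (J - s) = 1 - c s) :
    -- Pr[V = 1] = 1/2
    pr {t | Vq t = 1} = 1/2 ∧
    -- V is independent of the helper data U
    (∀ u : ℕ, pr {t | Vq t = 1 ∧ qU c J m t = u}
        = pr {t | Vq t = 1} * pr {t | qU c J m t = u}) ∧
    -- H(V | U) = 1  (V binary, so H(V|U=u) = h(Pr[V=1|U=u]))
    (∑ u ∈ Finset.range m, pr {t | qU c J m t = u} *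
      hb (pr {t | qU c J m t = u ∧ Vq t = 1} / pr {t | qU c J m t = u})) = 1 := by
  have hm' : (0 : ℝ) < m := by exact_mod_cast hm
  obtain ⟨k, hk⟩ := hJeven
  have hk1 : 1 ≤ k := by omega
  have hck : c k = 1/2 := by
    have h := hsym k (by omega)
    have : J - k = k := by omega
    rw [this] at h; linarith
  have hVq : ∀ t : ℝ, (Vq t = 1 ↔ 1/2 < t) := by
    intro t
    rw [Vq]
    split_ifs with h
    · exact ⟨fun _ => h, fun _ => rfl⟩
    · exact ⟨fun he => absurd he (by decide), fun h1 => absurd h1 h⟩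
  have hVset : {t : ℝ | Vq t = 1} = Ioi (1/2 : ℝ) := by
    ext t; simp [hVq t, mem_Ioi]
  -- Part 1
  have part1 : pr {t | Vq t = 1} = 1/2 := by
    have : {t : ℝ | Vq t = 1} ∩ Set.Ico (0:ℝ) 1 = Ioo (1/2 : ℝ) 1 := by
      rw [hVset]; ext t
      simp only [mem_inter_iff, mem_Ioi, mem_Ico, mem_Ioo]
      constructor
      · rintro ⟨h1, _, h3⟩; exact ⟨h1, h3⟩
      · rintro ⟨h1, h2⟩; exact ⟨h1, by linarith, h2⟩
    rw [pr, this, Real.volume_Ioo, ENNReal.toReal_ofReal (by norm_num)]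
    norm_num
  -- pieces
  set B : ℕ → ℕ → Set ℝ := fun u s =>
    Ico (c s + u * (c (s + 1) - c s) / m) (c s + (u + 1) * (c (s + 1) - c s) / m)
      ∩ Ico (c s) (c (s + 1)) with hBdef
  have hBmeas : ∀ u s, MeasurableSet (B u s) :=
    fun u s => measurableSet_Ico.inter measurableSet_Ico
  have hBsub : ∀ u s, B u s ⊆ Ico (c s) (c (s + 1)) := fun u s => inter_subset_right
  have hAeq : ∀ u, ∀ s < J, {t | qU c J m t = u} ∩ Ico (c s) (c (s + 1)) = B u s :=
    fun u s hs => aux_qU_inter hm hmono s hs u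
  have hBeq : ∀ s < J, ∀ u < m, B u s =
      Ico (c s + u * (c (s + 1) - c s) / m) (c s + (u + 1) * (c (s + 1) - c s) / m) := by
    intro s hs u hu
    have hp : 0 < c (s + 1) - c s := by have := hmono s hs; linarith
    have hl : c s ≤ c s + u * (c (s + 1) - c s) / m := by
      have : (0:ℝ) ≤ u * (c (s + 1) - c s) / m :=
        div_nonneg (mul_nonneg (Nat.cast_nonneg u) hp.le) hm'.le
      linarith
    have hr : c s + (u + 1) * (c (s + 1) - c s) / m ≤ c (s + 1) := by
      have h1 : ((u : ℝ) + 1) ≤ m := by exact_mod_cast hu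
      have h2 : ((u:ℝ) + 1) * (c (s + 1) - c s) / m ≤ c (s + 1) - c s := by
        rw [div_le_iff₀ hm']; nlinarith
      linarith
    exact inter_eq_left.mpr (Set.Ico_subset_Ico hl hr)
  have hvol1 : ∀ s < J, ∀ u < m, volume (B u s) = ENNReal.ofReal ((c (s + 1) - c s) / m) := by
    intro s hs u hu
    rw [hBeq s hs u hu, Real.volume_Ico]
    congr 1; ring
  have hBempty : ∀ s < J, ∀ u, m ≤ u → B u s = ∅ := by
    intro s hs u hu
    have hp : 0 < c (s + 1) - c s := by have := hmono s hs; linarith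
    rw [eq_empty_iff_forall_notMem]
    rintro t ⟨⟨h1, _⟩, _, h4⟩
    have h5 : (m : ℝ) ≤ u := by exact_mod_cast hu
    have h6 : c (s + 1) - c s ≤ u * (c (s + 1) - c s) / m := by
      rw [le_div_iff₀ hm']; nlinarith
    linarith
  -- pr of qU sets
  have hprU : ∀ u < m, pr {t | qU c J m t = u} = 1 / m := by
    intro u hu
    rw [aux_pr hmono hc0 hcJ (B u) (hBmeas u) (hBsub u) _ (hAeq u)]
    rw [Finset.sum_congr rfl (fun s hs => by
      rw [hvol1 s (Finset.mem_range.mp hs) u hu,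
        ENNReal.toReal_ofReal (by
          have := hmono s (Finset.mem_range.mp hs)
          exact div_nonneg (by linarith) hm'.le)])]
    rw [← Finset.sum_div, Finset.sum_range_sub c, hcJ, hc0]
    norm_num
  have hprU0 : ∀ u, m ≤ u → pr {t | qU c J m t = u} = 0 := by
    intro u hu
    rw [aux_pr hmono hc0 hcJ (B u) (hBmeas u) (hBsub u) _ (hAeq u)]
    apply Finset.sum_eq_zero
    intro s hs
    rw [hBempty s (Finset.mem_range.mp hs) u hu]
    simp
  -- pr of joint sets
  have hAVeq : ∀ u, ∀ s < J,
      {t | Vq t = 1 ∧ qU c J m t = u} ∩ Ico (c s) (c (s + 1)) = Ioi (1/2 : ℝ) ∩ B u s := by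
    intro u s hs
    have : {t : ℝ | Vq t = 1 ∧ qU c J m t = u} = Ioi (1/2 : ℝ) ∩ {t | qU c J m t = u} := by
      ext t; simp only [mem_setOf_eq, mem_inter_iff, mem_Ioi, hVq t]
    rw [this, inter_assoc, hAeq u s hs]
  have hVBsub : ∀ u s, Ioi (1/2 : ℝ) ∩ B u s ⊆ Ico (c s) (c (s + 1)) :=
    fun u s => inter_subset_right.trans (hBsub u s)
  have hVBvol : ∀ s, k ≤ s → s < J → ∀ u < m,
      volume (Ioi (1/2 : ℝ) ∩ B u s) = ENNReal.ofReal ((c (s + 1) - c s) / m) := by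
    intro s hks hs u hu
    have hp : 0 < c (s + 1) - c s := by have := hmono s hs; linarith
    have hcs : (1:ℝ)/2 ≤ c s := by
      have := aux_mono' hmono hks (by omega)
      linarith
    set l : ℝ := c s + u * (c (s + 1) - c s) / m with hldef
    set r : ℝ := c s + (u + 1) * (c (s + 1) - c s) / m with hrdef
    have hl : c s ≤ l := by
      have : (0:ℝ) ≤ u * (c (s + 1) - c s) / m :=
        div_nonneg (mul_nonneg (Nat.cast_nonneg u) hp.le) hm'.le
      rw [hldef]; linarith
    have hsub1 : Ioo l r ⊆ Ioi (1/2 : ℝ) ∩ B u s := by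
      intro t ht
      refine ⟨?_, ?_⟩
      · have : l < t := ht.1
        simp only [mem_Ioi]; linarith
      · rw [hBeq s hs u hu]
        exact ⟨le_of_lt ht.1, ht.2⟩
    have hsub2 : Ioi (1/2 : ℝ) ∩ B u s ⊆ Ico l r := by
      rw [hBeq s hs u hu]
      exact inter_subset_right
    have hrl : ENNReal.ofReal ((c (s + 1) - c s) / m) = ENNReal.ofReal (r - l) := by
      congr 1; rw [hldef, hrdef]; ring
    rw [hrl]
    refine le_antisymm ?_ ?_
    · calc volume (Ioi (1/2 : ℝ) ∩ B u s) ≤ volume (Ico l r) := measure_mono hsub2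
        _ = ENNReal.ofReal (r - l) := Real.volume_Ico
    · calc ENNReal.ofReal (r - l) = volume (Ioo l r) := Real.volume_Ioo.symm
        _ ≤ volume (Ioi (1/2 : ℝ) ∩ B u s) := measure_mono hsub1
  have hVBempty : ∀ s < k, ∀ u, Ioi (1/2 : ℝ) ∩ B u s = ∅ := by
    intro s hsk u
    rw [eq_empty_iff_forall_notMem]
    rintro t ⟨h1, hB1⟩
    have h2 : t < c (s + 1) := (hBsub u s hB1).2
    have h3 : c (s + 1) ≤ c k := aux_mono' hmono (by omega) (by omega)
    simp only [mem_Ioi] at h1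
    rw [hck] at h3
    linarith
  have hprVU : ∀ u < m, pr {t | Vq t = 1 ∧ qU c J m t = u} = 1 / (2 * m) := by
    intro u hu
    rw [aux_pr hmono hc0 hcJ (fun s => Ioi (1/2 : ℝ) ∩ B u s)
      (fun s => measurableSet_Ioi.inter (hBmeas u s)) (hVBsub u) _ (hAVeq u)]
    rw [Finset.range_eq_Ico, ← Finset.sum_Ico_consecutive _ (Nat.zero_le k) (by omega : k ≤ J)]
    have hz : ∑ s ∈ Finset.Ico 0 k, (volume (Ioi (1/2 : ℝ) ∩ B u s)).toReal = 0 := by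
      apply Finset.sum_eq_zero
      intro s hs
      rw [hVBempty s (by simpa using (Finset.mem_Ico.mp hs).2) u]
      simp
    rw [hz, zero_add]
    rw [Finset.sum_congr rfl (fun s hs => by
      obtain ⟨hs1, hs2⟩ := Finset.mem_Ico.mp hs
      rw [hVBvol s hs1 hs2 u hu,
        ENNReal.toReal_ofReal (by
          have := hmono s hs2
          exact div_nonneg (by linarith) hm'.le)])]
    rw [← Finset.sum_div, Finset.sum_Ico_eq_sub _ (by omega : k ≤ J),
      Finset.sum_range_sub c, Finset.sum_range_sub c, hcJ, hc0, hck]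
    norm_num
    ring
  have hprVU0 : ∀ u, m ≤ u → pr {t | Vq t = 1 ∧ qU c J m t = u} = 0 := by
    intro u hu
    rw [aux_pr hmono hc0 hcJ (fun s => Ioi (1/2 : ℝ) ∩ B u s)
      (fun s => measurableSet_Ioi.inter (hBmeas u s)) (hVBsub u) _ (hAVeq u)]
    apply Finset.sum_eq_zero
    intro s hs
    rw [hBempty s (Finset.mem_range.mp hs) u hu]
    simp
  refine ⟨part1, ?_, ?_⟩
  · intro u
    rcases Nat.lt_or_ge u m with hu | hu
    · rw [hprVU u hu, hprU u hu, part1]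
      rw [div_mul_eq_mul_div, one_mul, div_div]
      congr 1
      ring
    · rw [hprVU0 u hu, hprU0 u hu]
      ring
  · have hbhalf : hb (1/2) = 1 := by
      have hlogb : Real.logb 2 (1/2 : ℝ) = -1 := by
        rw [one_div, Real.logb_inv, Real.logb_self_eq_one] <;> norm_num
      rw [hb]
      rw [show (1:ℝ) - 1/2 = 1/2 by norm_num, hlogb]
      norm_num
    have hterm : ∀ u ∈ Finset.range m, pr {t | qU c J m t = u} *
        hb (pr {t | qU c J m t = u ∧ Vq t = 1} / pr {t | qU c J m t = u}) = 1 / m := by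
      intro u hu
      have hu' := Finset.mem_range.mp hu
      have hswap : {t : ℝ | qU c J m t = u ∧ Vq t = 1} = {t | Vq t = 1 ∧ qU c J m t = u} := by
        ext t; simp [and_comm]
      rw [hswap, hprVU u hu', hprU u hu']
      have hrat : (1 / (2 * (m:ℝ))) / (1 / m) = 1/2 := by
        field_simp
      rw [hrat, hbhalf, mul_one]
    rw [Finset.sum_congr rfl hterm, Finset.sum_const, Finset.card_range]
    rw [nsmul_eq_mul]; field_simp
end

section
/- Continuum helper data, case 2: Under the same setup, if p_0/2 < F(-τ) ≤ p_0, then H(Z | Ũ) = ((2p_0 - 2F(-τ))/p_0) h(p_0) + ((2F(-τ) - p_0)/p_0) h(2p_0). -/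
/- Zero-leakage quantising helper data system, modelled in quantile space:
since F is continuous and strictly increasing and the density is even,
T = F(X) is uniform on [0,1) and the quantisation boundaries q_s become
cumulative probabilities c s = F(q_s), with c 0 = 0, c J = 1, and the
symmetry of the density becoming c (J-s) = 1 - c s.  V = sign(X) = 1 iff
F(X) > 1/2.  S is the quantisation index, U the m-fold sub-interval index. -/

open MeasureTheory Set
open scoped Classical

/-- privacy bit Z = 1{|X| > τ}; in quantile space, with a = F(-τ) and an even
density, |X| > τ ↔ F(X) < a ∨ F(X) > 1 - a. -/
noncomputable def Zq (a : ℝ) (t : ℝ) : ℕ := if t < a ∨ 1 - a < t then 1 else 0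

/-- continuum helper data: the quantile Ũ = (F(x) - F(q_S))/p_S ∈ [0,1) -/
noncomputable def qUc (c : ℕ → ℝ) (J : ℕ) (t : ℝ) : ℝ :=
  (t - c (qS c J t)) / (c (qS c J t + 1) - c (qS c J t))

theorem stmt_7 (J : ℕ) (hJ : 2 ≤ J)
    (c : ℕ → ℝ) (hc0 : c 0 = 0) (hcJ : c J = 1)
    (hmono : ∀ s < J, c s < c (s + 1))
    (hsym : ∀ s ≤ J, c (J - s) = 1 - c s)
    (a : ℝ)
    -- case 2: p_0/2 < F(-τ) ≤ p_0, with p_0 = c 1, and 2 p_0 ≤ 1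
    (ha1 : c 1 / 2 < a) (ha2 : a ≤ c 1) (hp0 : 2 * c 1 ≤ 1)
    -- g ũ = Pr[Z = 1 | Ũ = ũ], the conditional probability given the
    -- (uniform) continuum helper data, characterised by disintegration:
    (g : ℝ → ℝ)
    (hg : ∀ A : Set ℝ, MeasurableSet A →
      pr {t | Zq a t = 1 ∧ qUc c J t ∈ A} = ∫ u in A ∩ Set.Ico (0:ℝ) 1, g u) :
    -- H(Z | Ũ) = ((2p_0 - 2F(-τ))/p_0) h(p_0) + ((2F(-τ) - p_0)/p_0) h(2p_0)
    (∫ u in Set.Ico (0:ℝ) 1, hb (g u))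
      = (2 * c 1 - 2 * a) / c 1 * hb (c 1) + (2 * a - c 1) / c 1 * hb (2 * c 1) := by
  have hp : 0 < c 1 := by have := hmono 0 (by omega); rwa [hc0] at this
  set p := c 1 with hpdef
  set e := (p - a) / p with hedef
  set b := a / p with hbdef
  have ha0 : 0 < a := lt_of_le_of_lt (by positivity) ha1
  have he0 : 0 ≤ e := div_nonneg (by linarith) hp.le
  have heb : e < b := by
    rw [hedef, hbdef, div_lt_div_iff₀ hp hp]; nlinarith
  have hb1 : b ≤ 1 := by rw [hbdef, div_le_one hp]; exact ha2
  have hmono' : ∀ t, t ≤ J → ∀ s, s ≤ t → c s ≤ c t := by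
    intro t
    induction t with
    | zero => intro _ s hs; rw [Nat.le_zero.mp hs]
    | succ n ih =>
      intro hn s hs
      rcases eq_or_lt_of_le hs with rfl | h
      · exact le_refl _
      · exact (ih (by omega) s (by omega)).trans (hmono n (by omega)).le
  have hJ1 : J - 1 + 1 = J := by omega
  have hcJ1 : c (J - 1) = 1 - p := by simpa using hsym 1 (by omega)
  -- quantiser on the two tails
  have hqlow : ∀ t : ℝ, 0 ≤ t → t < p → qS c J t = 0 := by
    intro t h0 h1
    unfold qS
    rw [Nat.findGreatest_eq_zero_iff]
    intro m hm hmJ hct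
    exact absurd (le_trans (hmono' m (by omega) 1 hm) hct) (not_le.mpr h1)
  have hqhigh : ∀ t : ℝ, 1 - p ≤ t → qS c J t = J - 1 := by
    intro t ht
    exact Nat.findGreatest_eq (by rw [hcJ1]; exact ht)
  have hUlow : ∀ t : ℝ, 0 ≤ t → t < p → qUc c J t = t / p := by
    intro t h0 h1; unfold qUc; rw [hqlow t h0 h1, hc0]
    norm_num
    rfl
  have hUhigh : ∀ t : ℝ, 1 - p ≤ t → qUc c J t = (t - (1 - p)) / p := by
    intro t ht; unfold qUc; rw [hqhigh t ht, hJ1, hcJ1, hcJ]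
    congr 1; ring
  -- the set appearing in the disintegration identity
  have hkeyset : ∀ A : Set ℝ,
      {t | Zq a t = 1 ∧ qUc c J t ∈ A} ∩ Ico (0:ℝ) 1
        = ((fun t => t / p) ⁻¹' A ∩ Ico 0 a)
          ∪ ((fun t => (t - (1 - p)) / p) ⁻¹' A ∩ Ioo (1 - a) 1) := by
    intro A
    ext t
    simp only [mem_inter_iff, mem_setOf_eq, mem_Ico, mem_Ioo, mem_union, mem_preimage]
    constructor
    · rintro ⟨⟨hz, hu⟩, h0, h1⟩
      have hz' : t < a ∨ 1 - a < t := by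
        by_cases h : t < a ∨ 1 - a < t
        · exact h
        · exact absurd hz (by unfold Zq; rw [if_neg h]; norm_num)
      rcases hz' with h | h
      · left
        rw [hUlow t h0 (lt_of_lt_of_le h ha2)] at hu
        exact ⟨hu, h0, h⟩
      · right
        rw [hUhigh t (by linarith)] at hu
        exact ⟨hu, h, h1⟩
    · rintro (⟨hu, h0, h⟩ | ⟨hu, h, h1⟩)
      · refine ⟨⟨by unfold Zq; rw [if_pos (Or.inl h)], ?_⟩, h0, by linarith⟩
        rw [hUlow t h0 (lt_of_lt_of_le h ha2)]; exact hu
      · refine ⟨⟨by unfold Zq; rw [if_pos (Or.inr h)], ?_⟩, by linarith, h1⟩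
        rw [hUhigh t (by linarith)]; exact hu
    -- interval preimage normalisations
  have l1 : ∀ x y : ℝ, x / p < y / p ↔ x < y := fun x y => div_lt_div_iff_of_pos_right hp
  have l2 : ∀ x : ℝ, 0 ≤ x / p ↔ 0 ≤ x := fun x => by rw [le_div_iff₀ hp, zero_mul]
  have hT1eq : ∀ A : Set ℝ, (fun t : ℝ => t / p) ⁻¹' A ∩ Ico 0 a
      = (· * p⁻¹) ⁻¹' (A ∩ Ico 0 b) := by
    intro A
    ext t
    simp only [mem_inter_iff, mem_preimage, mem_Ico]
    rw [show t * p⁻¹ = t / p from (div_eq_mul_inv t p).symm]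
    constructor
    · rintro ⟨hA', h0, h1⟩
      exact ⟨hA', (l2 t).mpr h0, by rw [hbdef]; exact (l1 t a).mpr h1⟩
    · rintro ⟨hA', h0, h1⟩
      rw [hbdef] at h1
      exact ⟨hA', (l2 t).mp h0, (l1 t a).mp h1⟩
  have hT2eq : ∀ A : Set ℝ, (fun t : ℝ => (t - (1 - p)) / p) ⁻¹' A ∩ Ioo (1 - a) 1
      = (fun t : ℝ => t + -(1 - p)) ⁻¹' ((· * p⁻¹) ⁻¹' (A ∩ Ioo e 1)) := by
    intro A
    ext t
    simp only [mem_inter_iff, mem_preimage, mem_Ioo]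
    rw [show (t + -(1 - p)) * p⁻¹ = (t - (1 - p)) / p by rw [div_eq_mul_inv]; ring]
    constructor
    · rintro ⟨hA', h1, h2⟩
      refine ⟨hA', ?_, ?_⟩
      · rw [hedef]
        exact (l1 (p - a) (t - (1 - p))).mpr (by linarith)
      · rw [div_lt_one hp]; linarith
    · rintro ⟨hA', h1, h2⟩
      rw [div_lt_one hp] at h2
      rw [hedef] at h1
      have := (l1 (p - a) (t - (1 - p))).mp h1
      exact ⟨hA', by linarith, by linarith⟩
  have hvolmul : ∀ S : Set ℝ, volume ((· * p⁻¹) ⁻¹' S) = ENNReal.ofReal p * volume S := by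
    intro S
    rw [Real.volume_preimage_mul_right (inv_ne_zero hp.ne') S, inv_inv, abs_of_pos hp]
  have hvoladd : ∀ (d : ℝ) (S : Set ℝ), volume ((fun t : ℝ => t + d) ⁻¹' S) = volume S :=
    fun d S => measure_preimage_add_right volume d S
  have hcover : Ico (0:ℝ) b ∪ Ioo e 1 = Ico (0:ℝ) 1 := by
    ext t
    simp only [mem_union, mem_Ico, mem_Ioo]
    constructor
    · rintro (⟨h1, h2⟩ | ⟨h1, h2⟩)
      · exact ⟨h1, lt_of_lt_of_le h2 hb1⟩
      · exact ⟨le_trans he0 h1.le, h2⟩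
    · rintro ⟨h1, h2⟩
      by_cases h : t < b
      · exact Or.inl ⟨h1, h⟩
      · exact Or.inr ⟨lt_of_lt_of_le heb (not_lt.mp h), h2⟩
  have hcap : Ico (0:ℝ) b ∩ Ioo e 1 = Ioo e b := by
    ext t
    simp only [mem_inter_iff, mem_Ico, mem_Ioo]
    constructor
    · rintro ⟨⟨h1, h2⟩, h3, h4⟩
      exact ⟨h3, h2⟩
    · rintro ⟨h1, h2⟩
      exact ⟨⟨he0.trans h1.le, h2⟩, h1, lt_of_lt_of_le h2 hb1⟩
  have hsplit : ∀ A : Set ℝ, MeasurableSet A →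
      volume (A ∩ Ico 0 b) + volume (A ∩ Ioo e 1)
        = volume (A ∩ Ico 0 1) + volume (A ∩ Ioo e b) := by
    intro A hA
    have h := measure_union_add_inter (μ := volume) (A ∩ Ico 0 b)
      (hA.inter measurableSet_Ioo : MeasurableSet (A ∩ Ioo e 1))
    rw [← h]
    congr 1
    · rw [← inter_union_distrib_left, hcover]
    · rw [inter_inter_inter_comm, inter_self, hcap]
  have hn2fin : volume (Set.Ioo e b) ≠ ⊤ := by
    rw [Real.volume_Ioo]; exact ENNReal.ofReal_ne_top
  have hn1fin : ∀ A : Set ℝ, volume (A ∩ Ico (0:ℝ) 1) ≠ ⊤ :=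
    fun A => ((measure_mono inter_subset_right).trans_lt
      (by rw [Real.volume_Ico]; exact ENNReal.ofReal_lt_top)).ne
  have hn2fin' : ∀ A : Set ℝ, volume (A ∩ Ioo e b) ≠ ⊤ :=
    fun A => (ne_top_of_le_ne_top hn2fin (measure_mono inter_subset_right))
  have hIS : ∀ A : Set ℝ, Ioo e b ∩ (A ∩ Ico (0:ℝ) 1) = A ∩ Ioo e b := by
    intro A
    ext t
    simp only [mem_inter_iff, mem_Ioo, mem_Ico]
    constructor
    · rintro ⟨⟨h1, h2⟩, h3, _⟩
      exact ⟨h3, h1, h2⟩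
    · rintro ⟨h3, h1, h2⟩
      exact ⟨⟨h1, h2⟩, h3, he0.trans h1.le, lt_of_lt_of_le h2 hb1⟩
  have key : ∀ A : Set ℝ, MeasurableSet A →
      pr {t | Zq a t = 1 ∧ qUc c J t ∈ A}
        = ∫ u in A ∩ Ico (0:ℝ) 1, (if u ∈ Ioo e b then 2 * p else p) := by
    intro A hA
    have hmeas2 : MeasurableSet ((fun t : ℝ => (t - (1 - p)) / p) ⁻¹' A ∩ Ioo (1 - a) 1) :=
      (((measurable_id.sub_const (1 - p)).div_const p) hA).inter measurableSet_Ioo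
    have hdisj : Disjoint ((fun t : ℝ => t / p) ⁻¹' A ∩ Ico 0 a)
        ((fun t : ℝ => (t - (1 - p)) / p) ⁻¹' A ∩ Ioo (1 - a) 1) := by
      rw [Set.disjoint_left]
      rintro t ⟨_, _, h2⟩ ⟨_, h3, _⟩
      linarith
    -- left side
    have hL : pr {t | Zq a t = 1 ∧ qUc c J t ∈ A}
        = p * ((volume (A ∩ Ico (0:ℝ) 1)).toReal + (volume (A ∩ Ioo e b)).toReal) := by
      unfold pr
      rw [hkeyset A, measure_union hdisj hmeas2, hT1eq A, hT2eq A, hvolmul, hvoladd, hvolmul,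
        ← mul_add, hsplit A hA, ENNReal.toReal_mul,
        ENNReal.toReal_add (hn1fin A) (hn2fin' A), ENNReal.toReal_ofReal hp.le]
    rw [hL]
    -- right side
    have hSfin : volume (A ∩ Ico (0:ℝ) 1) < ⊤ := lt_top_iff_ne_top.mpr (hn1fin A)
    have hconst : IntegrableOn (fun _ : ℝ => p) (A ∩ Ico (0:ℝ) 1) volume :=
      integrableOn_const hSfin.ne
    have hind : Integrable ((Ioo e b).indicator fun _ => p)
        (volume.restrict (A ∩ Ico (0:ℝ) 1)) := hconst.indicator measurableSet_Ioo
    have hre : ∫ u in A ∩ Ico (0:ℝ) 1, (if u ∈ Ioo e b then 2 * p else p)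
        = ∫ u in A ∩ Ico (0:ℝ) 1, ((Ioo e b).indicator (fun _ => p) u + p) :=
      integral_congr_ae (Filter.Eventually.of_forall fun u => by
        by_cases h : u ∈ Ioo e b <;> simp [h] <;> ring)
    rw [hre, integral_add hind hconst, integral_indicator measurableSet_Ioo,
      Measure.restrict_restrict measurableSet_Ioo, hIS A, setIntegral_const, setIntegral_const,
      smul_eq_mul, smul_eq_mul, measureReal_def, measureReal_def]
    ring
  have hIcoFin : volume (Ico (0:ℝ) 1) < ⊤ := by
    rw [Real.volume_Ico]; exact ENNReal.ofReal_lt_top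
  have intf : ∀ x y : ℝ, (∫ u in Ico (0:ℝ) 1, (if u ∈ Ioo e b then x else y))
      = (b - e) * x + (1 - (b - e)) * y := by
    intro x y
    have hconst : IntegrableOn (fun _ : ℝ => y) (Ico (0:ℝ) 1) volume :=
      integrableOn_const hIcoFin.ne
    have hconst' : IntegrableOn (fun _ : ℝ => x - y) (Ico (0:ℝ) 1) volume :=
      integrableOn_const hIcoFin.ne
    have hind : Integrable ((Ioo e b).indicator fun _ => x - y)
        (volume.restrict (Ico (0:ℝ) 1)) := hconst'.indicator measurableSet_Ioo
    have hre : (∫ u in Ico (0:ℝ) 1, (if u ∈ Ioo e b then x else y))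
        = ∫ u in Ico (0:ℝ) 1, ((Ioo e b).indicator (fun _ => x - y) u + y) :=
      integral_congr_ae (Filter.Eventually.of_forall fun u => by
        by_cases h : u ∈ Ioo e b <;> simp [h] <;> ring)
    have hI : Ioo e b ∩ Ico (0:ℝ) 1 = Ioo e b :=
      inter_eq_left.mpr (fun t ht => ⟨he0.trans ht.1.le, lt_of_lt_of_le ht.2 hb1⟩)
    rw [hre, integral_add hind hconst, integral_indicator measurableSet_Ioo,
      Measure.restrict_restrict measurableSet_Ioo, hI, setIntegral_const, setIntegral_const,
      measureReal_def, measureReal_def, Real.volume_Ioo, Real.volume_Ico, ENNReal.toReal_ofReal (by linarith),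
      ENNReal.toReal_ofReal (by norm_num), smul_eq_mul, smul_eq_mul]
    ring
  have key2 : ∀ s : Set ℝ, MeasurableSet s →
      ∫ u in s, g u ∂(volume.restrict (Ico (0:ℝ) 1))
        = ∫ u in s, (if u ∈ Ioo e b then 2 * p else p) ∂(volume.restrict (Ico (0:ℝ) 1)) := by
    intro s hs
    rw [Measure.restrict_restrict hs]
    exact (hg s hs).symm.trans (key s hs)
  have hfint : Integrable (fun u : ℝ => if u ∈ Ioo e b then 2 * p else p)
      (volume.restrict (Ico (0:ℝ) 1)) := by
    have hc : IntegrableOn (fun _ : ℝ => p) (Ico (0:ℝ) 1) volume :=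
      integrableOn_const hIcoFin.ne
    have hc2 : Integrable (fun u : ℝ => (Ioo e b).indicator (fun _ => p) u + p)
        (volume.restrict (Ico (0:ℝ) 1)) := (hc.indicator measurableSet_Ioo).add hc
    refine hc2.congr (Filter.Eventually.of_forall fun u => ?_)
    by_cases h : u ∈ Ioo e b <;> simp [Set.indicator_apply, h] <;> ring
  have hgint : Integrable g (volume.restrict (Ico (0:ℝ) 1)) := by
    by_contra hcon
    have h0 : (∫ u, g u ∂(volume.restrict (Ico (0:ℝ) 1))) = 0 := integral_undef hcon
    have h1 := key2 univ MeasurableSet.univ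
    rw [setIntegral_univ, setIntegral_univ] at h1
    have h2 : (∫ u, (if u ∈ Ioo e b then 2 * p else p) ∂(volume.restrict (Ico (0:ℝ) 1)))
        = (b - e) * (2 * p) + (1 - (b - e)) * p := intf (2 * p) p
    rw [h0, h2] at h1
    nlinarith [mul_pos hp (sub_pos.mpr heb)]
  have hae : g =ᵐ[volume.restrict (Ico (0:ℝ) 1)]
      (fun u : ℝ => if u ∈ Ioo e b then 2 * p else p) :=
    ae_eq_of_forall_setIntegral_eq_of_sigmaFinite
      (fun s _ _ => hgint.integrableOn) (fun s _ _ => hfint.integrableOn)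
      (fun s hs _ => key2 s hs)
  have hfin : ∫ u in Ico (0:ℝ) 1, hb (g u)
      = ∫ u in Ico (0:ℝ) 1, hb (if u ∈ Ioo e b then 2 * p else p) :=
    integral_congr_ae (hae.mono fun u hu => by simp only []; rw [hu])
  rw [hfin]
  simp only [apply_ite hb]
  rw [intf (hb (2 * p)) (hb p)]
  have h1 : b - e = (2 * a - p) / p := by
    rw [hbdef, hedef]; field_simp; ring
  rw [h1]
  have h2 : (1:ℝ) - (2 * a - p) / p = (2 * p - 2 * a) / p := by
    field_simp; ring
  rw [h2]
  ring
end

section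
/- In the zero-leakage quantising HDS, the helper data U (sub-interval index) is uniform on {0,...,m-1} and independent of the quantisation symbol S; in particular I(U; S) = 0. -/
/- Zero-leakage quantising helper data system, modelled in quantile space:
since F is continuous and strictly increasing and the density is even,
T = F(X) is uniform on [0,1) and the quantisation boundaries q_s become
cumulative probabilities c s = F(q_s), with c 0 = 0, c J = 1, and the
symmetry of the density becoming c (J-s) = 1 - c s.  V = sign(X) = 1 iff
F(X) > 1/2.  S is the quantisation index, U the m-fold sub-interval index. -/

open MeasureTheory Set
open scoped Classical

section helpers

variable {J m : ℕ} {c : ℕ → ℝ}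

lemma cmono (hmono : ∀ s < J, c s < c (s + 1)) :
    ∀ j ≤ J, ∀ i ≤ j, c i ≤ c j := by
  intro j hj
  induction j with
  | zero => intro i hi; exact le_of_eq (congrArg c (by omega))
  | succ n ih =>
    intro i hi
    rcases Nat.eq_or_lt_of_le hi with h | h
    · rw [h]
    · exact (ih (by omega) i (by omega)).trans (hmono n (by omega)).le

lemma qS_eq (hJ : 1 ≤ J) (hmono : ∀ s < J, c s < c (s + 1)) {s : ℕ} (hs : s < J)
    {t : ℝ} (ht : t ∈ Ico (c s) (c (s + 1))) : qS c J t = s := by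
  have key := cmono hmono
  rw [qS, Nat.findGreatest_eq_iff]
  refine ⟨by omega, fun _ => ht.1, fun n hn hnb hcn => ?_⟩
  exact absurd (le_trans (key n (by omega) (s + 1) (by omega)) hcn) (not_le.mpr ht.2)

lemma qS_mem (hJ : 1 ≤ J) (hc0 : c 0 = 0) (hcJ : c J = 1)
    {t : ℝ} (ht : t ∈ Ico (0:ℝ) 1) :
    qS c J t < J ∧ t ∈ Ico (c (qS c J t)) (c (qS c J t + 1)) := by
  unfold qS
  set g := Nat.findGreatest (fun s => c s ≤ t) (J - 1) with hg
  have hsle : g ≤ J - 1 := Nat.findGreatest_le (P := fun s => c s ≤ t) (J - 1)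
  have hsJ : g < J := by omega
  have h1 : c g ≤ t :=
    Nat.findGreatest_spec (P := fun s => c s ≤ t) (m := 0) (n := J - 1) (Nat.zero_le _)
      (by simpa [hc0] using ht.1)
  have h2 : t < c (g + 1) := by
    rcases Nat.lt_or_ge (g + 1) J with h | h
    · by_contra hle
      exact Nat.findGreatest_is_greatest (P := fun s => c s ≤ t) (n := J - 1) (k := g + 1)
        (Nat.lt_succ_self _) (by omega) (not_lt.mp hle)
    · have hgJ : g + 1 = J := by omega
      rw [hgJ, hcJ]; exact ht.2
  exact ⟨hsJ, h1, h2⟩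

lemma qU_eq_iff (hm : 1 ≤ m) {s : ℕ} {t : ℝ} (hp : 0 < c (s + 1) - c s)
    (hqs : qS c J t = s) (ht : t ∈ Ico (c s) (c (s + 1))) (u : ℕ) :
    qU c J m t = u ↔ c s + u * (c (s + 1) - c s) / m ≤ t ∧
      t < c s + (u + 1) * (c (s + 1) - c s) / m := by
  have hm' : (0:ℝ) < m := by exact_mod_cast hm
  set p : ℝ := c (s + 1) - c s with hpdef
  have h0 : (0:ℝ) ≤ (m:ℝ) * (t - c s) / p :=
    div_nonneg (mul_nonneg hm'.le (sub_nonneg.mpr ht.1)) hp.le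
  have hfl := Int.floor_nonneg.mpr h0
  rw [qU, hqs]
  rw [show (⌊(m:ℝ) * (t - c s) / p⌋.toNat = u ↔ ⌊(m:ℝ) * (t - c s) / p⌋ = (u:ℤ)) from by
    omega]
  rw [Int.floor_eq_iff]
  push_cast
  constructor
  · rintro ⟨h1, h2⟩
    have h1' := (le_div_iff₀ hp).mp h1
    have h2' := (div_lt_iff₀ hp).mp h2
    constructor
    · rw [← sub_nonneg]
      have : (u:ℝ) * p / m ≤ t - c s := by
        rw [div_le_iff₀ hm']; nlinarith
      linarith
    · have : t - c s < ((u:ℝ) + 1) * p / m := by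
        rw [lt_div_iff₀ hm']; nlinarith
      linarith
  · rintro ⟨h1, h2⟩
    have h1' : (u:ℝ) * p ≤ (t - c s) * m := by
      rw [← div_le_iff₀ hm']; linarith
    have h2' : (t - c s) * m < ((u:ℝ) + 1) * p := by
      rw [← lt_div_iff₀ hm']; linarith
    constructor
    · rw [le_div_iff₀ hp]; nlinarith
    · rw [div_lt_iff₀ hp]; nlinarith


lemma joint_set (hJ : 1 ≤ J) (hm : 1 ≤ m) (hc0 : c 0 = 0) (hcJ : c J = 1)
    (hmono : ∀ s < J, c s < c (s + 1)) {s u : ℕ} (hs : s < J) (hu : u < m) :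
    {t : ℝ | qU c J m t = u ∧ qS c J t = s} ∩ Ico (0:ℝ) 1
      = Ico (c s + u * (c (s + 1) - c s) / m)
          (c s + (u + 1) * (c (s + 1) - c s) / m) := by
  have key := cmono hmono
  have hm' : (0:ℝ) < m := by exact_mod_cast hm
  have hp : 0 < c (s + 1) - c s := sub_pos.mpr (hmono s hs)
  have hupos : (0:ℝ) ≤ (u:ℝ) * (c (s + 1) - c s) / m :=
    div_nonneg (mul_nonneg (Nat.cast_nonneg u) hp.le) hm'.le
  have hub : ((u:ℝ) + 1) * (c (s + 1) - c s) / m ≤ c (s + 1) - c s := by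
    rw [div_le_iff₀ hm']
    have : ((u:ℝ) + 1) ≤ m := by exact_mod_cast hu
    nlinarith
  ext t
  simp only [mem_inter_iff, mem_setOf_eq, mem_Ico]
  constructor
  · rintro ⟨⟨hqu, hqs⟩, ht⟩
    obtain ⟨h1, h2⟩ := qS_mem hJ hc0 hcJ ht
    rw [hqs] at h2
    exact (qU_eq_iff hm hp hqs h2 u).mp hqu
  · rintro ⟨h1, h2⟩
    have htE : t ∈ Ico (c s) (c (s + 1)) := by
      constructor
      · linarith
      · linarith
    have hqs := qS_eq hJ hmono hs htE
    have ht01 : t ∈ Ico (0:ℝ) 1 := by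
      constructor
      · have := key s (by omega) 0 (Nat.zero_le _)
        rw [hc0] at this
        linarith [htE.1]
      · have := key J le_rfl (s + 1) (by omega)
        rw [hcJ] at this
        linarith [htE.2]
    exact ⟨⟨(qU_eq_iff hm hp hqs htE u).mpr ⟨h1, h2⟩, hqs⟩, ht01⟩

lemma S_set (hJ : 1 ≤ J) (hc0 : c 0 = 0) (hcJ : c J = 1)
    (hmono : ∀ s < J, c s < c (s + 1)) {s : ℕ} (hs : s < J) :
    {t : ℝ | qS c J t = s} ∩ Ico (0:ℝ) 1 = Ico (c s) (c (s + 1)) := by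
  have key := cmono hmono
  ext t
  simp only [mem_inter_iff, mem_setOf_eq, mem_Ico]
  constructor
  · rintro ⟨hqs, ht⟩
    obtain ⟨h1, h2⟩ := qS_mem hJ hc0 hcJ ht
    rw [hqs] at h2
    exact h2
  · intro htE
    refine ⟨qS_eq hJ hmono hs htE, ?_, ?_⟩
    · have := key s (by omega) 0 (Nat.zero_le _)
      rw [hc0] at this
      linarith [htE.1]
    · have := key J le_rfl (s + 1) (by omega)
      rw [hcJ] at this
      linarith [htE.2]

lemma S_set_empty (hJ : 1 ≤ J) (hc0 : c 0 = 0) (hcJ : c J = 1)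
    {s : ℕ} (hs : J ≤ s) :
    {t : ℝ | qS c J t = s} ∩ Ico (0:ℝ) 1 = ∅ := by
  ext t
  simp only [mem_inter_iff, mem_setOf_eq, mem_empty_iff_false, iff_false, not_and]
  intro hqs ht
  obtain ⟨h1, _⟩ := qS_mem hJ hc0 hcJ ht
  omega

lemma U_lt (hJ : 1 ≤ J) (hm : 1 ≤ m) (hc0 : c 0 = 0) (hcJ : c J = 1)
    (hmono : ∀ s < J, c s < c (s + 1)) {t : ℝ} (ht : t ∈ Ico (0:ℝ) 1) :
    qU c J m t < m := by
  have hm' : (0:ℝ) < m := by exact_mod_cast hm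
  obtain ⟨hsJ, htE⟩ := qS_mem hJ hc0 hcJ ht
  set s := qS c J t with hsdef
  have hp : 0 < c (s + 1) - c s := sub_pos.mpr (hmono s hsJ)
  have h := (qU_eq_iff (J := J) hm hp rfl htE (qU c J m t)).mp rfl
  have hd : (qU c J m t : ℝ) * (c (s + 1) - c s) / m < c (s + 1) - c s := by
    linarith [h.1, htE.2]
  rw [div_lt_iff₀ hm'] at hd
  have : (qU c J m t : ℝ) < m := by nlinarith
  exact_mod_cast this


lemma pr_of_eq {A : Set ℝ} {a b : ℝ} (hab : a ≤ b) (h : A ∩ Ico (0:ℝ) 1 = Ico a b) :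
    pr A = b - a := by
  rw [pr, h, Real.volume_Ico, ENNReal.toReal_ofReal (by linarith)]

lemma pr_of_empty {A : Set ℝ} (h : A ∩ Ico (0:ℝ) 1 = ∅) : pr A = 0 := by
  rw [pr, h]
  simp

lemma pr_joint (hJ : 1 ≤ J) (hm : 1 ≤ m) (hc0 : c 0 = 0) (hcJ : c J = 1)
    (hmono : ∀ s < J, c s < c (s + 1)) {s u : ℕ} (hs : s < J) (hu : u < m) :
    pr {t : ℝ | qU c J m t = u ∧ qS c J t = s} = (c (s + 1) - c s) / m := by
  have hm' : (0:ℝ) < m := by exact_mod_cast hm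
  have hp : 0 < c (s + 1) - c s := sub_pos.mpr (hmono s hs)
  have := pr_of_eq (a := c s + u * (c (s + 1) - c s) / m)
    (b := c s + (u + 1) * (c (s + 1) - c s) / m)
    (by
      have hd : (0:ℝ) ≤ (c (s + 1) - c s) / m := by positivity
      rw [mul_div_assoc, mul_div_assoc]
      nlinarith)
    (joint_set hJ hm hc0 hcJ hmono hs hu)
  rw [this]
  field_simp
  ring

lemma pr_S (hJ : 1 ≤ J) (hc0 : c 0 = 0) (hcJ : c J = 1)
    (hmono : ∀ s < J, c s < c (s + 1)) {s : ℕ} (hs : s < J) :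
    pr {t : ℝ | qS c J t = s} = c (s + 1) - c s := by
  have := pr_of_eq (a := c s) (b := c (s + 1)) (hmono s hs).le
    (S_set hJ hc0 hcJ hmono hs)
  rw [this]

lemma pr_U (hJ : 1 ≤ J) (hm : 1 ≤ m) (hc0 : c 0 = 0) (hcJ : c J = 1)
    (hmono : ∀ s < J, c s < c (s + 1)) {u : ℕ} (hu : u < m) :
    pr {t : ℝ | qU c J m t = u} = 1 / m := by
  have hm' : (0:ℝ) < m := by exact_mod_cast hm
  have key := cmono hmono
  set f : ℕ → Set ℝ := fun s =>
    Ico (c s + u * (c (s + 1) - c s) / m) (c s + (u + 1) * (c (s + 1) - c s) / m) with hf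
  have hset : {t : ℝ | qU c J m t = u} ∩ Ico (0:ℝ) 1 = ⋃ s ∈ Finset.range J, f s := by
    ext t
    simp only [mem_inter_iff, mem_setOf_eq, Finset.mem_range, mem_iUnion, exists_prop]
    constructor
    · rintro ⟨hqu, ht⟩
      refine ⟨qS c J t, (qS_mem hJ hc0 hcJ ht).1, ?_⟩
      have h : t ∈ {x : ℝ | qU c J m x = u ∧ qS c J x = qS c J t} ∩ Ico (0:ℝ) 1 :=
        ⟨⟨hqu, rfl⟩, ht⟩
      rw [joint_set hJ hm hc0 hcJ hmono (qS_mem hJ hc0 hcJ ht).1 hu] at h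
      exact h
    · rintro ⟨s, hs, hts⟩
      have hts' : t ∈ Ico (c s + u * (c (s + 1) - c s) / m)
          (c s + (u + 1) * (c (s + 1) - c s) / m) := hts
      rw [← joint_set hJ hm hc0 hcJ hmono hs hu] at hts'
      exact ⟨hts'.1.1, hts'.2⟩
  have hsub : ∀ s < J, f s ⊆ Ico (c s) (c (s + 1)) := by
    intro s hs t ht
    have hp : 0 < c (s + 1) - c s := sub_pos.mpr (hmono s hs)
    have h1 : (0:ℝ) ≤ (u:ℝ) * (c (s + 1) - c s) / m :=
      div_nonneg (mul_nonneg (Nat.cast_nonneg u) hp.le) hm'.le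
    have h2 : ((u:ℝ) + 1) * (c (s + 1) - c s) / m ≤ c (s + 1) - c s := by
      rw [div_le_iff₀ hm']
      have : ((u:ℝ) + 1) ≤ m := by exact_mod_cast hu
      nlinarith
    exact ⟨by linarith [ht.1], by linarith [ht.2]⟩
  have hdisj : (↑(Finset.range J) : Set ℕ).PairwiseDisjoint f := by
    intro s₁ hs₁ s₂ hs₂ hne
    simp only [Finset.coe_range, mem_Iio] at hs₁ hs₂
    apply Set.disjoint_of_subset (hsub s₁ hs₁) (hsub s₂ hs₂)
    rcases hne.lt_or_gt with h | h
    · rw [Set.disjoint_left]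
      intro x hx1 hx2
      have hcc : c (s₁ + 1) ≤ c s₂ := key s₂ (by omega) (s₁ + 1) (by omega)
      have := hx1.2
      have := hx2.1
      linarith
    · rw [Set.disjoint_right]
      intro x hx1 hx2
      have hcc : c (s₂ + 1) ≤ c s₁ := key s₁ (by omega) (s₂ + 1) (by omega)
      have := hx1.2
      have := hx2.1
      linarith
  rw [pr, hset, measure_biUnion_finset hdisj (fun s _ => measurableSet_Ico)]
  have hvol : ∀ s ∈ Finset.range J, volume (f s) = ENNReal.ofReal ((c (s + 1) - c s) / m) := by
    intro s hs
    rw [hf]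
    rw [Real.volume_Ico]
    congr 1
    field_simp
    ring
  rw [Finset.sum_congr rfl hvol,
    ← ENNReal.ofReal_sum_of_nonneg (fun s hs =>
      div_nonneg (by linarith [hmono s (Finset.mem_range.mp hs)]) hm'.le)]
  rw [← Finset.sum_div, Finset.sum_range_sub (fun i => c i) J, hcJ, hc0,
    ENNReal.toReal_ofReal (by positivity)]
  norm_num

lemma U_set_empty (hJ : 1 ≤ J) (hm : 1 ≤ m) (hc0 : c 0 = 0) (hcJ : c J = 1)
    (hmono : ∀ s < J, c s < c (s + 1)) {u : ℕ} (hu : m ≤ u) :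
    {t : ℝ | qU c J m t = u} ∩ Ico (0:ℝ) 1 = ∅ := by
  ext t
  simp only [mem_inter_iff, mem_setOf_eq, mem_empty_iff_false, iff_false, not_and]
  intro hqu ht
  have := U_lt hJ hm hc0 hcJ hmono ht
  omega

end helpers

theorem stmt_15 (J m : ℕ) (hJ : 1 ≤ J) (hm : 1 ≤ m)
    (c : ℕ → ℝ) (hc0 : c 0 = 0) (hcJ : c J = 1)
    (hmono : ∀ s < J, c s < c (s + 1)) :
    -- U is uniform on {0,...,m-1}
    (∀ u < m, pr {t | qU c J m t = u} = 1 / m) ∧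
    -- U is independent of the quantisation symbol S
    (∀ u s : ℕ, pr {t | qU c J m t = u ∧ qS c J t = s}
        = pr {t | qU c J m t = u} * pr {t | qS c J t = s}) ∧
    -- in particular the mutual information I(U; S) = 0
    (∑ u ∈ Finset.range m, ∑ s ∈ Finset.range J,
      pr {t | qU c J m t = u ∧ qS c J t = s} *
        Real.logb 2 (pr {t | qU c J m t = u ∧ qS c J t = s} /
          (pr {t | qU c J m t = u} * pr {t | qS c J t = s}))) = 0 := by
  have hm' : (0:ℝ) < m := by exact_mod_cast hm
  have hjointE : ∀ u s : ℕ, m ≤ u ∨ J ≤ s →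
      {t : ℝ | qU c J m t = u ∧ qS c J t = s} ∩ Ico (0:ℝ) 1 = ∅ := by
    intro u s h
    rcases h with h | h
    · rw [← subset_empty_iff, ← U_set_empty hJ hm hc0 hcJ hmono h]
      exact inter_subset_inter_left _ (fun t ht => ht.1)
    · rw [← subset_empty_iff, ← S_set_empty hJ hc0 hcJ h]
      exact inter_subset_inter_left _ (fun t ht => ht.2)
  have hind : ∀ u s : ℕ, pr {t | qU c J m t = u ∧ qS c J t = s}
      = pr {t | qU c J m t = u} * pr {t | qS c J t = s} := by
    intro u s
    by_cases hu : u < m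
    · by_cases hs : s < J
      · rw [pr_joint hJ hm hc0 hcJ hmono hs hu, pr_U hJ hm hc0 hcJ hmono hu,
          pr_S hJ hc0 hcJ hmono hs]
        ring
      · rw [pr_of_empty (hjointE u s (Or.inr (by omega))),
          pr_of_empty (S_set_empty hJ hc0 hcJ (by omega))]
        ring
    · rw [pr_of_empty (hjointE u s (Or.inl (by omega))),
        pr_of_empty (U_set_empty hJ hm hc0 hcJ hmono (by omega))]
      ring
  refine ⟨fun u hu => pr_U hJ hm hc0 hcJ hmono hu, hind, ?_⟩
  apply Finset.sum_eq_zero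
  intro u hu
  apply Finset.sum_eq_zero
  intro s hs
  have hu' := Finset.mem_range.mp hu
  have hs' := Finset.mem_range.mp hs
  have hp : 0 < c (s + 1) - c s := sub_pos.mpr (hmono s hs')
  rw [hind u s, pr_U hJ hm hc0 hcJ hmono hu', pr_S hJ hc0 hcJ hmono hs',
    div_self (mul_pos (by positivity) hp).ne', Real.logb_one, mul_zero]
end

section
/- Monotonicity of the rare-threshold leakage bound: the function g(q) = h(2q) - (2/m) h(mq), defined for 0 < q < min(1/(2), 1/m) with integer m ≥ 3, is strictly positive for q < 1/m sufficiently small; i.e., for m ≥ 3 the quantising HDS with m sub-intervals strictly leaks about Z: H(Z) - H(Z|U) = h(2F(-τ)) - (2/m)h(mF(-τ)) > 0 whenever 0 < F(-τ) < p_0/m and m ≥ 3. -/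
lemma hb_eq (p : ℝ) : hb p = Real.binEntropy p / Real.log 2 := by
  unfold hb Real.binEntropy
  rw [Real.log_inv, Real.log_inv, Real.logb, Real.logb]
  ring

/-- For m ≥ 3 sub-intervals the quantising HDS strictly leaks about Z:
H(Z) - H(Z|U) = h(2F(-τ)) - (2/m)h(mF(-τ)) > 0 whenever
0 < F(-τ) < p_0/m (with 0 < p_0 ≤ 1). -/
theorem stmt_19 (m : ℕ) (hm : 3 ≤ m) (p₀ q : ℝ)
    (hp0 : 0 < p₀) (hp1 : p₀ ≤ 1)
    (hq0 : 0 < q) (hq : q < p₀ / m) :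
    0 < hb (2 * q) - 2 / m * hb (m * q) := by
  have hm0 : (0:ℝ) < m := by positivity
  have hmq1 : (m:ℝ) * q < 1 := by
    have := (lt_div_iff₀ hm0).mp hq
    linarith
  have hmq0 : 0 < (m:ℝ) * q := by positivity
  set a : ℝ := 2 / (m:ℝ) with ha
  have ha0 : 0 < a := by positivity
  have ha1 : a < 1 := by
    rw [ha, div_lt_one hm0]
    have : (3:ℝ) ≤ m := by exact_mod_cast hm
    linarith
  have hconc := Real.strictConcave_binEntropy
  have key : (1 - a) • Real.binEntropy 0 + a • Real.binEntropy (m*q)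
      < Real.binEntropy ((1 - a) • (0:ℝ) + a • (m*q)) :=
    hconc.2 (Set.mem_Icc.mpr ⟨le_refl 0, zero_le_one⟩)
      (Set.mem_Icc.mpr ⟨le_of_lt hmq0, le_of_lt hmq1⟩)
      (ne_of_lt hmq0) (by linarith) ha0 (by ring)
  have hcomb : (1 - a) • (0:ℝ) + a • ((m:ℝ)*q) = 2 * q := by
    simp only [smul_eq_mul, mul_zero, zero_add, ha]
    field_simp
  rw [hcomb, Real.binEntropy_zero, smul_zero, zero_add, smul_eq_mul] at key
  have hlog2 : 0 < Real.log 2 := Real.log_pos (by norm_num)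
  rw [hb_eq, hb_eq, sub_pos, ha] at *
  have key2 : (2 / (m:ℝ) * Real.binEntropy ((m:ℝ)*q)) / Real.log 2
      < Real.binEntropy (2*q) / Real.log 2 := by gcongr
  calc 2 / (m:ℝ) * (Real.binEntropy ((m:ℝ)*q) / Real.log 2)
      = (2 / (m:ℝ) * Real.binEntropy ((m:ℝ)*q)) / Real.log 2 := by ring
    _ < _ := key2
end
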